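/- arXiv:2602.24001 — 3 statements merged into one kernel-verified Lean document; each statement's English description precedes it below -/
import Mathlib

section
/- Let 0 < κ < 2π and 0 < γ < 1, and let u_κ, v_κ be defined by u_κ(α) = κ(sin(κα) - (1-cos(κα))·sin κ/(1-cos κ)) and v_κ(α) = κ(1-γ)(sin(κα) + cos(κα)·sin κ/(1-cos κ)). Then ∫₀¹ (u_κ(α) + v_κ(α)) dα > 2(1-γ) > 0. -/
/-!
Writing `t = sin κ / (1 - cos κ)`, the integrand is `κ ((2 - γ) sin κα + (2 - γ) t cos κα - t)`,
whose integral is `(2 - γ)(1 - cos κ + t sin κ) - κ t = 2(2 - γ) - κ t`, because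
`sin² κ = (1 - cos κ)(1 + cos κ)`. So the claim is `κ sin κ < 2 (1 - cos κ)`, which in the
half angle `y = κ / 2 ∈ (0, π)` reads `y cos y < sin y`, i.e. `y < tan y` where `cos y > 0`.
-/

open Real intervalIntegral

namespace Real

lemma mul_cos_lt_sin {x : ℝ} (hx0 : 0 < x) (hxπ : x < π) : x * cos x < sin x := by
  rcases le_or_gt (cos x) 0 with hcos | hcos
  · exact (mul_nonpos_of_nonneg_of_nonpos hx0.le hcos).trans_lt (sin_pos_of_pos_of_lt_pi hx0 hxπ)
  · have hx : x < π / 2 := by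
      by_contra! h
      exact hcos.not_ge (cos_nonpos_of_pi_div_two_le_of_le h (by linarith))
    have h := lt_tan hx0 hx
    rwa [tan_eq_sin_div_cos, lt_div_iff₀ hcos] at h

lemma mul_sin_lt_two_mul_one_sub_cos {x : ℝ} (hx0 : 0 < x) (hx : x < 2 * π) :
    x * sin x < 2 * (1 - cos x) := by
  obtain ⟨y, rfl⟩ : ∃ y, x = 2 * y := ⟨x / 2, by ring⟩
  have hy0 : 0 < y := by linarith
  have hyπ : y < π := by linarith
  have hsin := sin_pos_of_pos_of_lt_pi hy0 hyπ
  rw [sin_two_mul, cos_two_mul]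
  nlinarith [mul_lt_mul_of_pos_left (mul_cos_lt_sin hy0 hyπ) hsin, sin_sq_add_cos_sq y]

lemma one_sub_cos_pos {x : ℝ} (hx0 : 0 < x) (hx : x < 2 * π) : 0 < 1 - cos x :=
  sub_pos.2 <| (cos_le_one x).lt_of_ne fun h =>
    hx0.ne' ((cos_eq_one_iff_of_lt_of_lt (by linarith [pi_pos]) hx).1 h)

end Real

lemma integral_mul_sin_add_cos_add_const (κ a b d : ℝ) :
    ∫ α in (0 : ℝ)..1, κ * (a * sin (κ * α) + b * cos (κ * α) + d) =
      a * (1 - cos κ) + b * sin κ + κ * d := by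
  have hderiv : ∀ α ∈ Set.uIcc (0 : ℝ) 1,
      HasDerivAt (fun α => -a * cos (κ * α) + b * sin (κ * α) + κ * d * α)
        (κ * (a * sin (κ * α) + b * cos (κ * α) + d)) α := by
    intro α _
    have hlin : HasDerivAt (fun α : ℝ => κ * α) κ α := by
      simpa using (hasDerivAt_id α).const_mul κ
    have hcos := ((hasDerivAt_cos (κ * α)).comp α hlin).const_mul (-a)
    have hsin := ((hasDerivAt_sin (κ * α)).comp α hlin).const_mul b
    exact ((hcos.add hsin).add ((hasDerivAt_id α).const_mul (κ * d))).congr_deriv (by ring)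
  rw [integral_eq_sub_of_hasDerivAt hderiv (by apply Continuous.intervalIntegrable; fun_prop)]
  simp only [mul_zero, mul_one, cos_zero, sin_zero]
  ring

theorem stmt_3_general (κ γ : ℝ) (h0 : 0 < κ) (h2 : κ < 2 * π) (hγ1 : γ < 1)
    (u v : ℝ → ℝ)
    (hu : ∀ α, u α = κ * (Real.sin (κ * α) - (1 - Real.cos (κ * α)) * Real.sin κ / (1 - Real.cos κ)))
    (hv : ∀ α, v α = κ * (1 - γ) * (Real.sin (κ * α) + Real.cos (κ * α) * Real.sin κ / (1 - Real.cos κ))) :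
    (∫ α in (0:ℝ)..1, (u α + v α)) > 2 * (1 - γ) ∧ 2 * (1 - γ) > 0 := by
  have hc := one_sub_cos_pos h0 h2
  set t := sin κ / (1 - cos κ) with ht
  have hsum : (fun α => u α + v α) =
      fun α => κ * ((2 - γ) * sin (κ * α) + (2 - γ) * t * cos (κ * α) + -t) := by
    funext α
    rw [hu, hv, ht]
    ring
  have hts : 1 - cos κ + t * sin κ = 2 := by
    rw [ht]
    field_simp
    nlinarith [sin_sq_add_cos_sq κ]
  have hκt : κ * t < 2 := by
    rw [ht, mul_div_assoc', div_lt_iff₀ hc]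
    exact mul_sin_lt_two_mul_one_sub_cos h0 h2
  rw [hsum, integral_mul_sin_add_cos_add_const]
  constructor <;> nlinarith

theorem stmt_3 (κ γ : ℝ) (h0 : 0 < κ) (h2 : κ < 2 * π) (hγ0 : 0 < γ) (hγ1 : γ < 1)
    (u v : ℝ → ℝ)
    (hu : ∀ α, u α = κ * (Real.sin (κ * α) - (1 - Real.cos (κ * α)) * Real.sin κ / (1 - Real.cos κ)))
    (hv : ∀ α, v α = κ * (1 - γ) * (Real.sin (κ * α) + Real.cos (κ * α) * Real.sin κ / (1 - Real.cos κ))) :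
    (∫ α in (0:ℝ)..1, (u α + v α)) > 2 * (1 - γ) ∧ 2 * (1 - γ) > 0 :=
  stmt_3_general κ γ h0 h2 hγ1 u v hu hv
end

section
/- Let β > 0, 0 < γ < 1, and κ = (1/β)·√((1-γ)/γ). Suppose X : [0,1] → ℝ² of the form X(α) = (A sin(κα) + B cos(κα))·(1,γ) + (Cα + D)·(1,1) satisfies the boundary conditions X₁(α) - X₂(α) = 0 and (d/dα)X₂(α) = 0 at α = 0 and α = 1 (where X = (X₁, X₂) = (b, ψ)). If κ is not an integer multiple of 2π, then A = B = C = 0, i.e., X is a constant multiple of (1,1). -/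
/-!
Subtracting the two components, `b - ψ = (1 - γ)(A sin κα + B cos κα)`, so the condition at `α = 0`
gives `B = 0`. Subtracting the two Neumann conditions for `ψ` eliminates `C` and leaves
`γ κ A (cos κ - 1) = 0`; as `κ ∉ 2πℤ` means `cos κ ≠ 1` (which also forces `κ ≠ 0`), `A = 0`,
and then `ψ'(0) = γ κ A + C = 0` gives `C = 0`.
-/

open Real

lemma hasDerivAt_trig_add_affine (γ κ A B C D x : ℝ) :
    HasDerivAt (fun α => γ * (A * sin (κ * α) + B * cos (κ * α)) + (C * α + D))
      (γ * κ * (A * cos (κ * x) - B * sin (κ * x)) + C) x := by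
  have hlin : HasDerivAt (fun α : ℝ => κ * α) κ x := by
    simpa using (hasDerivAt_id x).const_mul κ
  exact ((((hlin.sin.const_mul A).add (hlin.cos.const_mul B)).const_mul γ).add
    (((hasDerivAt_id x).const_mul C).add_const D)).congr_deriv (by ring)

theorem stmt_6_general (γ : ℝ) (hγ0 : 0 < γ) (hγ1 : γ < 1)
    (κ : ℝ)
    (A B C D : ℝ) (b ψ : ℝ → ℝ)
    (hb : ∀ α, b α = (A * Real.sin (κ * α) + B * Real.cos (κ * α)) + (C * α + D))
    (hψ : ∀ α, ψ α = γ * (A * Real.sin (κ * α) + B * Real.cos (κ * α)) + (C * α + D))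
    (hbc0 : b 0 - ψ 0 = 0)
    (hd0 : deriv ψ 0 = 0) (hd1 : deriv ψ 1 = 0)
    (hnot : ¬ ∃ n : ℤ, κ = 2 * π * n) :
    A = 0 ∧ B = 0 ∧ C = 0 := by
  have hcos : cos κ ≠ 1 := by
    rw [Ne, cos_eq_one_iff]
    rintro ⟨n, hn⟩
    exact hnot ⟨n, by rw [← hn]; ring⟩
  have hκ : κ ≠ 0 := by
    rintro rfl
    exact hcos cos_zero
  have hderiv (x : ℝ) : deriv ψ x = γ * κ * (A * cos (κ * x) - B * sin (κ * x)) + C := by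
    rw [funext hψ]
    exact (hasDerivAt_trig_add_affine γ κ A B C D x).deriv
  rw [hderiv] at hd0 hd1
  simp only [mul_zero, mul_one, cos_zero, sin_zero] at hd0 hd1
  have hB : B = 0 := by
    rw [hb, hψ] at hbc0
    simp only [mul_zero, sin_zero, cos_zero] at hbc0
    have : (1 - γ) * B = 0 := by linear_combination hbc0
    exact (mul_eq_zero.mp this).resolve_left (by linarith)
  have hA : A = 0 := by
    have : (γ * κ * (cos κ - 1)) * A = 0 := by linear_combination hd1 - hd0 + γ * κ * sin κ * hB
    exact (mul_eq_zero.mp this).resolve_left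
      (mul_ne_zero (mul_ne_zero hγ0.ne' hκ) (sub_ne_zero.mpr hcos))
  refine ⟨hA, hB, ?_⟩
  linear_combination hd0 - γ * κ * hA

theorem stmt_6 (β γ : ℝ) (hβ : 0 < β) (hγ0 : 0 < γ) (hγ1 : γ < 1)
    (κ : ℝ) (hκ : κ = (1 / β) * Real.sqrt ((1 - γ) / γ))
    (A B C D : ℝ) (b ψ : ℝ → ℝ)
    (hb : ∀ α, b α = (A * Real.sin (κ * α) + B * Real.cos (κ * α)) + (C * α + D))
    (hψ : ∀ α, ψ α = γ * (A * Real.sin (κ * α) + B * Real.cos (κ * α)) + (C * α + D))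
    (hbc0 : b 0 - ψ 0 = 0) (hbc1 : b 1 - ψ 1 = 0)
    (hd0 : deriv ψ 0 = 0) (hd1 : deriv ψ 1 = 0)
    (hnot : ¬ ∃ n : ℤ, κ = 2 * π * n) :
    A = 0 ∧ B = 0 ∧ C = 0 :=
  stmt_6_general γ hγ0 hγ1 κ A B C D b ψ hb hψ hbc0 hd0 hd1 hnot
end

section
/- Let γ ∈ (0,1) and β₀ = (1/(2π))√((1-γ)/γ). The pair (u,v) with u(α) = A* sin(2πα) + D*(cos(2πα) - 1) and v(α) = 4π²γ(A* sin(2πα) + D* cos(2πα)), for any A*, D* ∈ ℝ, satisfies γu'' + v = 0 and (β₀²v - u)'' - v = 0 on (0,1), together with the boundary conditions u = 0 and (4π²γu - v)' = 0 at α = 0 and α = 1. -/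
open Real

/-
Every component is a combination of `sin (2πα)`, `cos (2πα)` and a constant, and
`(a sin kx + b cos kx + d)'' = -k² (a sin kx + b cos kx)`. Hence `γu'' = -4π²γ s = -v` with
`s = A* sin 2πα + D* cos 2πα`, and since `β₀² · 4π²γ = 1 - γ` one has `β₀²v - u = D* - γ s`,
whose second derivative is `4π²γ s = v`. On the boundary, `4π²γu - v = -4π²γD*` is constant.
-/

noncomputable def sinusoid (k a b x : ℝ) : ℝ := a * sin (k * x) + b * cos (k * x)

lemma hasDerivAt_sinusoid (k a b x : ℝ) :
    HasDerivAt (sinusoid k a b) (sinusoid k (-(k * b)) (k * a) x) x := by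
  have hk : HasDerivAt (fun y => k * y) k x := by simpa using (hasDerivAt_id x).const_mul k
  exact ((hk.sin.const_mul a).add (hk.cos.const_mul b)).congr_deriv (by rw [sinusoid]; ring)

lemma deriv_sinusoid (k a b : ℝ) :
    deriv (sinusoid k a b) = sinusoid k (-(k * b)) (k * a) :=
  funext fun x => (hasDerivAt_sinusoid k a b x).deriv

lemma deriv_deriv_sinusoid_add_const (k a b d x : ℝ) :
    deriv (deriv fun y => sinusoid k a b y + d) x = -k ^ 2 * sinusoid k a b x := by
  have h : deriv (fun y => sinusoid k a b y + d) = sinusoid k (-(k * b)) (k * a) :=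
    funext fun y => ((hasDerivAt_sinusoid k a b y).add_const d).deriv
  rw [h, deriv_sinusoid]
  simp only [sinusoid]
  ring

lemma sq_inv_two_pi_mul_sqrt_mul {γ : ℝ} (hγ0 : 0 < γ) (hγ1 : γ ≤ 1) :
    ((1 / (2 * π)) * √((1 - γ) / γ)) ^ 2 * (4 * π ^ 2 * γ) = 1 - γ := by
  rw [mul_pow, sq_sqrt (div_nonneg (by linarith) hγ0.le)]
  field_simp [pi_ne_zero]
  ring

theorem stmt_8 (γ : ℝ) (hγ0 : 0 < γ) (hγ1 : γ < 1)
    (β₀ : ℝ) (hβ₀ : β₀ = (1 / (2 * π)) * Real.sqrt ((1 - γ) / γ))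
    (As Ds : ℝ) (u v : ℝ → ℝ)
    (hu : ∀ α, u α = As * Real.sin (2 * π * α) + Ds * (Real.cos (2 * π * α) - 1))
    (hv : ∀ α, v α = 4 * π ^ 2 * γ * (As * Real.sin (2 * π * α) + Ds * Real.cos (2 * π * α))) :
    (∀ α ∈ Set.Ioo (0:ℝ) 1,
        γ * deriv (deriv u) α + v α = 0 ∧
        deriv (deriv (fun x => β₀ ^ 2 * v x - u x)) α - v α = 0) ∧
    u 0 = 0 ∧ u 1 = 0 ∧
    deriv (fun x => 4 * π ^ 2 * γ * u x - v x) 0 = 0 ∧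
    deriv (fun x => 4 * π ^ 2 * γ * u x - v x) 1 = 0 := by
  have hβ : β₀ ^ 2 * (4 * π ^ 2 * γ) = 1 - γ := hβ₀ ▸ sq_inv_two_pi_mul_sqrt_mul hγ0 hγ1.le
  have hu_eq : u = fun x => sinusoid (2 * π) As Ds x + -Ds := by
    funext x; rw [hu, sinusoid]; ring
  have hw_eq : (fun x => β₀ ^ 2 * v x - u x) =
      fun x => sinusoid (2 * π) (-(γ * As)) (-(γ * Ds)) x + Ds := by
    funext x; rw [hu, hv, sinusoid]
    linear_combination (As * sin (2 * π * x) + Ds * cos (2 * π * x)) * hβ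
  have h_const : (fun x => 4 * π ^ 2 * γ * u x - v x) = fun _ => -(4 * π ^ 2 * γ * Ds) := by
    funext x; rw [hu, hv]; ring
  refine ⟨fun α _ => ⟨?_, ?_⟩, by simp [hu], by simp [hu], by simp [h_const], by simp [h_const]⟩
  · rw [hu_eq, deriv_deriv_sinusoid_add_const, hv, sinusoid]; ring
  · rw [hw_eq, deriv_deriv_sinusoid_add_const, hv, sinusoid]; ring
end
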